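/- arXiv:1705.10598 — 6 statements merged into one kernel-verified Lean document; each statement's English description precedes it below -/
import Mathlib

section
/- Let 𝐝 be a metric on {1,…,d}, L > l ≥ 0, A a d×d matrix of bandwidth at most l (A_{i,j}=0 if 𝐝(i,j)>l), C any d×d matrix, and D^L the cutoff matrix with [D^L]_{i,j} = 1_{𝐝(i,j)≤L}. Then the commutator Δ = A (C ∘ D^L) A^T − (A C A^T) ∘ D^L has Δ_{i,j} = 0 whenever |𝐝(i,j) − L| > 2l. -/
open Matrix BigOperators

/-- Localization commutation: if A has bandwidth ≤ l, the difference
Δ = A (C ∘ D^L) Aᵀ − (A C Aᵀ) ∘ D^L has nonzero entries only for indices (i,j)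
with |𝐝(i,j) − L| ≤ 2l. -/
theorem localization_commutator_support {d : ℕ}
    (dd : Fin d → Fin d → ℝ)
    (hdd_self : ∀ i j, dd i j = 0 ↔ i = j)
    (hdd_symm : ∀ i j, dd i j = dd j i)
    (hdd_tri : ∀ i j k, dd i k ≤ dd i j + dd j k)
    (l L : ℝ) (hl : 0 ≤ l) (hL : l < L)
    (A C : Matrix (Fin d) (Fin d) ℝ)
    (hband : ∀ i j, l < dd i j → A i j = 0)
    (DL : Matrix (Fin d) (Fin d) ℝ)
    (hDL : ∀ i j, DL i j = if dd i j ≤ L then (1:ℝ) else 0) :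
    ∀ i j, 2 * l < |dd i j - L| →
      (A * Matrix.hadamard C DL * Aᵀ - Matrix.hadamard (A * C * Aᵀ) DL) i j = 0 := by
  intro i j hij
  simp only [Matrix.sub_apply, Matrix.hadamard_apply, Matrix.mul_apply,
    Matrix.transpose_apply, Finset.sum_mul]
  rw [sub_eq_zero]
  refine Finset.sum_congr rfl fun m _ => ?_
  refine Finset.sum_congr rfl fun k _ => ?_
  by_cases hA1 : A i k = 0
  · simp [hA1]
  by_cases hA2 : A j m = 0
  · simp [hA2]
  have hik : dd i k ≤ l := le_of_not_gt fun h => hA1 (hband i k h)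
  have hjm : dd j m ≤ l := le_of_not_gt fun h => hA2 (hband j m h)
  have hkey : DL k m = DL i j := by
    rw [hDL, hDL]
    rcases lt_or_ge (2 * l) (dd i j - L) with h | h
    · have h1 := hdd_tri i k j
      have h2 := hdd_tri k m j
      have h3 := hdd_symm j m
      rw [if_neg (by linarith), if_neg (by linarith)]
    · have h' : 2 * l < L - dd i j := by
        rcases abs_cases (dd i j - L) with ⟨he, _⟩ | ⟨he, _⟩ <;> linarith [hij, he]
      have h1 := hdd_tri k i m
      have h2 := hdd_tri i j m
      have h3 := hdd_symm k i
      rw [if_pos (by linarith), if_pos (by linarith)]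
  rw [hkey]; ring
end

section
/- Under the setting of the previous statement, suppose additionally that |C_{u,v}| ≤ M Φ(𝐝(u,v)) for 𝐝(u,v) ≤ L and |C_{u,v}| ≤ M Φ(L) for 𝐝(u,v) > L, where Φ: ℝ₊ → [0,1] is decreasing. Then for all (i,j) with L − 2l ≤ 𝐝(i,j), the entries of Δ = A (C ∘ D^L) A^T − (A C A^T) ∘ D^L satisfy |Δ_{i,j}| ≤ M Φ(L−2l) (max_{u,v}|A_{u,v}|)² 𝓑_l², where 𝓑_l = max_i #{j : 𝐝(i,j) ≤ l}. -/
open Matrix BigOperators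

/-- If in addition C follows an (M,Φ,L)-localized structure, then the entries of
the localization commutation error Δ = A (C ∘ D^L) Aᵀ − (A C Aᵀ) ∘ D^L with
L − 2l ≤ 𝐝(i,j) satisfy |Δ_{i,j}| ≤ M Φ(L−2l) (max_{u,v}|A_{u,v}|)² 𝓑_l². -/
theorem localization_commutator_entry_bound {d : ℕ}
    (dd : Fin d → Fin d → ℝ)
    (hdd_self : ∀ i j, dd i j = 0 ↔ i = j)
    (hdd_symm : ∀ i j, dd i j = dd j i)
    (hdd_tri : ∀ i j k, dd i k ≤ dd i j + dd j k)
    (l L M : ℝ) (hl : 0 ≤ l) (hL : l < L) (hM : 0 ≤ M)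
    (Φ : ℝ → ℝ) (hΦ_anti : Antitone Φ)
    (hΦ_range : ∀ x, 0 ≤ x → 0 ≤ Φ x ∧ Φ x ≤ 1)
    (A C : Matrix (Fin d) (Fin d) ℝ)
    (hband : ∀ i j, l < dd i j → A i j = 0)
    (hloc₁ : ∀ u v, dd u v ≤ L → |C u v| ≤ M * Φ (dd u v))
    (hloc₂ : ∀ u v, L < dd u v → |C u v| ≤ M * Φ L)
    (DL : Matrix (Fin d) (Fin d) ℝ)
    (hDL : ∀ i j, DL i j = if dd i j ≤ L then (1:ℝ) else 0) :
    ∀ i j, L - 2 * l ≤ dd i j →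
      |(A * Matrix.hadamard C DL * Aᵀ - Matrix.hadamard (A * C * Aᵀ) DL) i j| ≤
        M * Φ (L - 2 * l) * (⨆ u : Fin d, ⨆ v : Fin d, |A u v|) ^ 2 *
          (⨆ i : Fin d, ((Finset.univ.filter (fun j => dd i j ≤ l)).card : ℝ)) ^ 2 := by
  intro i j hij
  set K := ⨆ u : Fin d, ⨆ v : Fin d, |A u v| with hKdef
  set B := ⨆ i : Fin d, ((Finset.univ.filter (fun j => dd i j ≤ l)).card : ℝ) with hBdef
  have hA_le : ∀ u v, |A u v| ≤ K := by
    intro u v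
    calc |A u v| ≤ ⨆ v : Fin d, |A u v| :=
          le_ciSup (f := fun v => |A u v|) (Set.Finite.bddAbove (Set.finite_range _)) v
      _ ≤ K := by
          rw [hKdef]
          exact le_ciSup (f := fun u => ⨆ v : Fin d, |A u v|)
            (Set.Finite.bddAbove (Set.finite_range _)) u
  have hKnn : 0 ≤ K := (abs_nonneg _).trans (hA_le i i)
  have hcard : ∀ a : Fin d, ((Finset.univ.filter (fun j => dd a j ≤ l)).card : ℝ) ≤ B :=
    fun a => by
      rw [hBdef]
      exact le_ciSup (f := fun a : Fin d => ((Finset.univ.filter (fun j => dd a j ≤ l)).card : ℝ))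
        (Set.Finite.bddAbove (Set.finite_range _)) a
  have hBnn : 0 ≤ B := (Nat.cast_nonneg _).trans (hcard i)
  have hΦnn : 0 ≤ Φ (L - 2 * l) := by
    rcases le_or_gt 0 (L - 2 * l) with h | h
    · exact (hΦ_range _ h).1
    · exact le_trans (hΦ_range 0 le_rfl).1 (hΦ_anti h.le)
  have hdd_nonneg : ∀ u v, 0 ≤ dd u v := by
    intro u v
    have := hdd_tri u v u
    rw [(hdd_self u u).mpr rfl, hdd_symm v u] at this
    linarith
  -- bound for the C-factor
  have hC : ∀ u v, dd i u ≤ l → dd j v ≤ l →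
      |C u v * (DL u v - DL i j)| ≤ M * Φ (L - 2 * l) := by
    intro u v hu hv
    rw [hDL u v, hDL i j]
    by_cases h1 : dd u v ≤ L
    · by_cases h2 : dd i j ≤ L
      · simp [h1, h2, mul_nonneg hM hΦnn]
      · -- dd u v ≥ L - 2l
        have htr : dd i j ≤ dd i u + dd u v + dd v j := by
          have t1 := hdd_tri i u j
          have t2 := hdd_tri u v j
          linarith
        have huv : L - 2 * l ≤ dd u v := by
          have := hdd_symm v j
          push_neg at h2
          linarith
        have := hloc₁ u v h1
        have hmono := hΦ_anti huv
        simp only [if_pos h1, if_neg h2, sub_zero, mul_one]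
        calc |C u v| ≤ M * Φ (dd u v) := hloc₁ u v h1
          _ ≤ M * Φ (L - 2 * l) := mul_le_mul_of_nonneg_left hmono hM
    · push_neg at h1
      have hCb : |C u v| ≤ M * Φ (L - 2 * l) := by
        calc |C u v| ≤ M * Φ L := hloc₂ u v h1
          _ ≤ M * Φ (L - 2 * l) :=
            mul_le_mul_of_nonneg_left (hΦ_anti (by linarith)) hM
      have hd : |(0 : ℝ) - if dd i j ≤ L then (1:ℝ) else 0| ≤ 1 := by
        by_cases h2 : dd i j ≤ L <;> simp [h2]
      calc |C u v * ((if dd u v ≤ L then (1:ℝ) else 0) - if dd i j ≤ L then (1:ℝ) else 0)|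
          = |C u v| * |(0:ℝ) - if dd i j ≤ L then (1:ℝ) else 0| := by
            rw [if_neg (not_le.mpr h1), abs_mul]
        _ ≤ (M * Φ (L - 2 * l)) * 1 :=
            mul_le_mul hCb hd (abs_nonneg _) (mul_nonneg hM hΦnn)
        _ = M * Φ (L - 2 * l) := mul_one _
  -- rewrite the entry as a double sum
  have edouble : ∀ X : Matrix (Fin d) (Fin d) ℝ,
      (A * X * Aᵀ) i j = ∑ u : Fin d, ∑ v : Fin d, A i u * A j v * X u v := by
    intro X
    simp only [Matrix.mul_apply, Matrix.transpose_apply, Finset.sum_mul]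
    rw [Finset.sum_comm]
    exact Finset.sum_congr rfl fun u _ => Finset.sum_congr rfl fun v _ => by ring
  have hentry : (A * Matrix.hadamard C DL * Aᵀ - Matrix.hadamard (A * C * Aᵀ) DL) i j
      = ∑ u : Fin d, ∑ v : Fin d, A i u * A j v * (C u v * (DL u v - DL i j)) := by
    rw [Matrix.sub_apply, Matrix.hadamard_apply, edouble, edouble]
    simp only [Matrix.hadamard_apply]
    rw [Finset.sum_mul, ← Finset.sum_sub_distrib]
    refine Finset.sum_congr rfl fun u _ => ?_
    rw [Finset.sum_mul, ← Finset.sum_sub_distrib]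
    refine Finset.sum_congr rfl fun v _ => ?_
    ring
  rw [hentry]
  -- bound each term
  have hterm : ∀ u v, |A i u * A j v * (C u v * (DL u v - DL i j))| ≤
      (if dd i u ≤ l then K else 0) * (if dd j v ≤ l then K else 0) * (M * Φ (L - 2 * l)) := by
    intro u v
    by_cases hu : dd i u ≤ l
    · by_cases hv : dd j v ≤ l
      · simp only [if_pos hu, if_pos hv]
        rw [abs_mul, abs_mul]
        exact mul_le_mul (mul_le_mul (hA_le i u) (hA_le j v) (abs_nonneg _) hKnn)
          (hC u v hu hv) (abs_nonneg _) (mul_nonneg hKnn hKnn)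
      · simp [hband j v (not_le.mp hv), if_neg hv]
    · simp [hband i u (not_le.mp hu), if_neg hu]
  have hsum : |∑ u : Fin d, ∑ v : Fin d, A i u * A j v * (C u v * (DL u v - DL i j))| ≤
      ∑ u : Fin d, ∑ v : Fin d,
        (if dd i u ≤ l then K else 0) * (if dd j v ≤ l then K else 0) * (M * Φ (L - 2 * l)) := by
    refine (Finset.abs_sum_le_sum_abs _ _).trans (Finset.sum_le_sum fun u _ => ?_)
    exact (Finset.abs_sum_le_sum_abs _ _).trans (Finset.sum_le_sum fun v _ => hterm u v)
  refine hsum.trans ?_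
  have step : ∀ (f g : Fin d → ℝ) (c : ℝ),
      ∑ u : Fin d, ∑ v : Fin d, f u * g v * c
        = (∑ u : Fin d, f u) * (∑ v : Fin d, g v) * c := by
    intro f g c
    rw [Finset.sum_mul_sum, Finset.sum_mul]
    exact Finset.sum_congr rfl fun u _ => by rw [Finset.sum_mul]
  have ite_sum : ∀ a : Fin d,
      ∑ u : Fin d, (if dd a u ≤ l then K else 0)
        = ((Finset.univ.filter (fun u => dd a u ≤ l)).card : ℝ) * K := by
    intro a
    rw [← Finset.sum_filter, Finset.sum_const, nsmul_eq_mul]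
  rw [step (fun u => if dd i u ≤ l then K else 0) (fun v => if dd j v ≤ l then K else 0),
    ite_sum i, ite_sum j]
  have h1 := hcard i
  have h2 := hcard j
  have hc1 : (0:ℝ) ≤ ((Finset.univ.filter (fun u => dd i u ≤ l)).card : ℝ) := Nat.cast_nonneg _
  have hc2 : (0:ℝ) ≤ ((Finset.univ.filter (fun v => dd j v ≤ l)).card : ℝ) := Nat.cast_nonneg _
  have hMΦ : 0 ≤ M * Φ (L - 2 * l) := mul_nonneg hM hΦnn
  have hcc : ((Finset.univ.filter (fun u => dd i u ≤ l)).card : ℝ) *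
      ((Finset.univ.filter (fun v => dd j v ≤ l)).card : ℝ) ≤ B * B :=
    mul_le_mul h1 h2 hc2 hBnn
  calc ((Finset.univ.filter (fun u => dd i u ≤ l)).card : ℝ) * K *
        (((Finset.univ.filter (fun v => dd j v ≤ l)).card : ℝ) * K) * (M * Φ (L - 2 * l))
      = (((Finset.univ.filter (fun u => dd i u ≤ l)).card : ℝ) *
          ((Finset.univ.filter (fun v => dd j v ≤ l)).card : ℝ)) * (K ^ 2 * (M * Φ (L - 2 * l))) := by
        ring
    _ ≤ (B * B) * (K ^ 2 * (M * Φ (L - 2 * l))) :=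
        mul_le_mul_of_nonneg_right hcc (mul_nonneg (sq_nonneg K) hMΦ)
    _ = M * Φ (L - 2 * l) * K ^ 2 * B ^ 2 := by ring
end

section
/- Let X be a nonnegative random variable with P(X > t) ≤ 8 d² exp(−c K min{t, t²}) for all t ≥ 0. If ε ∈ (0,1) and K ≥ max{ε^{-2}, 8/(cε), 2 log d/(c ε²)}, then E X² ≤ 6ε. -/
/-!
By the layer-cake formula, `E X² = ∫₀^∞ 2t P(X > t) dt`. Bound `P(X > t)` by `1` on
`[0, 2ε]`, contributing `4ε²`, and for `t > 2ε` by `8d² (e^{-rt} + e^{-rt²})` with `r = cK`,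
whose moment integrals are explicit. Since `r ≥ 8/ε` and `d² ≤ e^{rε²}`, the second part is
at most `2ε`.
-/

open MeasureTheory Real Set Filter Topology

theorem Real.exp_neg_mul_min_le_add (a x y : ℝ) :
    exp (-(a * min x y)) ≤ exp (-(a * x)) + exp (-(a * y)) := by
  rcases min_choice x y with h | h <;> rw [h] <;> linarith [exp_pos (-(a * x)), exp_pos (-(a * y))]

section TailIntegrals

variable {a b : ℝ}

theorem hasDerivAt_neg_exp_neg_mul_sq_div (hb : b ≠ 0) (t : ℝ) :
    HasDerivAt (fun t => -exp (-(b * t ^ 2)) / (2 * b)) (t * exp (-(b * t ^ 2))) t := by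
  refine ((((hasDerivAt_pow 2 t).const_mul b).neg.exp.neg).div_const (2 * b)).congr_deriv ?_
  simp only [Pi.neg_apply]
  field_simp
  ring

theorem hasDerivAt_neg_mul_exp_neg_mul (hb : b ≠ 0) (t : ℝ) :
    HasDerivAt (fun t => -(t / b + 1 / b ^ 2) * exp (-(b * t))) (t * exp (-(b * t))) t := by
  refine ((((hasDerivAt_id t).div_const b).add_const (1 / b ^ 2)).neg.mul
    ((hasDerivAt_id t).const_mul b).neg.exp).congr_deriv ?_
  simp only [Pi.neg_apply, id]
  field_simp
  ring

theorem tendsto_neg_exp_neg_mul_sq_div_atTop (hb : 0 < b) :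
    Tendsto (fun t => -exp (-(b * t ^ 2)) / (2 * b)) atTop (𝓝 0) := by
  have : Tendsto (fun t : ℝ => -(b * t ^ 2)) atTop atBot :=
    tendsto_neg_atTop_atBot.comp ((tendsto_pow_atTop two_ne_zero).const_mul_atTop hb)
  simpa using ((tendsto_exp_atBot.comp this).neg).div_const (2 * b)

theorem tendsto_neg_mul_exp_neg_mul_atTop (hb : 0 < b) :
    Tendsto (fun t => -(t / b + 1 / b ^ 2) * exp (-(b * t))) atTop (𝓝 0) := by
  have hlin : Tendsto (fun t => t * exp (-(b * t))) atTop (𝓝 0) := by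
    simpa using tendsto_rpow_mul_exp_neg_mul_atTop_nhds_zero 1 b hb
  have hexp : Tendsto (fun t => exp (-(b * t))) atTop (𝓝 0) :=
    tendsto_exp_atBot.comp (tendsto_neg_atTop_atBot.comp (tendsto_id.const_mul_atTop hb))
  convert ((hlin.div_const b).add (hexp.div_const (b ^ 2))).neg using 2 with t
  · ring
  · simp

theorem integrableOn_Ioi_mul_exp_neg_mul_sq (hb : 0 < b) (ha : 0 ≤ a) :
    IntegrableOn (fun t => t * exp (-(b * t ^ 2))) (Ioi a) :=
  integrableOn_Ioi_deriv_of_nonneg' (fun t _ => hasDerivAt_neg_exp_neg_mul_sq_div hb.ne' t)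
    (fun _ ht => mul_nonneg (ha.trans ht.out.le) (exp_pos _).le)
    (tendsto_neg_exp_neg_mul_sq_div_atTop hb)

theorem integral_Ioi_mul_exp_neg_mul_sq (hb : 0 < b) (ha : 0 ≤ a) :
    ∫ t in Ioi a, t * exp (-(b * t ^ 2)) = exp (-(b * a ^ 2)) / (2 * b) := by
  rw [integral_Ioi_of_hasDerivAt_of_nonneg' (fun t _ => hasDerivAt_neg_exp_neg_mul_sq_div hb.ne' t)
    (fun _ ht => mul_nonneg (ha.trans ht.out.le) (exp_pos _).le)
    (tendsto_neg_exp_neg_mul_sq_div_atTop hb)]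
  ring

theorem integrableOn_Ioi_mul_exp_neg_mul (hb : 0 < b) (ha : 0 ≤ a) :
    IntegrableOn (fun t => t * exp (-(b * t))) (Ioi a) :=
  integrableOn_Ioi_deriv_of_nonneg' (fun t _ => hasDerivAt_neg_mul_exp_neg_mul hb.ne' t)
    (fun _ ht => mul_nonneg (ha.trans ht.out.le) (exp_pos _).le)
    (tendsto_neg_mul_exp_neg_mul_atTop hb)

theorem integral_Ioi_mul_exp_neg_mul (hb : 0 < b) (ha : 0 ≤ a) :
    ∫ t in Ioi a, t * exp (-(b * t)) = (a / b + 1 / b ^ 2) * exp (-(b * a)) := by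
  rw [integral_Ioi_of_hasDerivAt_of_nonneg' (fun t _ => hasDerivAt_neg_mul_exp_neg_mul hb.ne' t)
    (fun _ ht => mul_nonneg (ha.trans ht.out.le) (exp_pos _).le)
    (tendsto_neg_mul_exp_neg_mul_atTop hb)]
  ring

theorem integrableOn_Ioi_two_mul_mul_exp_neg_add (hb : 0 < b) (ha : 0 ≤ a) (A : ℝ) :
    IntegrableOn (fun t => 2 * t * (A * (exp (-(b * t)) + exp (-(b * t ^ 2))))) (Ioi a) := by
  simp_rw [show ∀ t, 2 * t * (A * (exp (-(b * t)) + exp (-(b * t ^ 2)))) =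
      2 * A * (t * exp (-(b * t))) + 2 * A * (t * exp (-(b * t ^ 2))) from fun t => by ring]
  exact ((integrableOn_Ioi_mul_exp_neg_mul hb ha).const_mul _).add
    ((integrableOn_Ioi_mul_exp_neg_mul_sq hb ha).const_mul _)

theorem integral_Ioi_two_mul_mul_exp_neg_add (hb : 0 < b) (ha : 0 ≤ a) (A : ℝ) :
    ∫ t in Ioi a, 2 * t * (A * (exp (-(b * t)) + exp (-(b * t ^ 2)))) =
      2 * A * ((a / b + 1 / b ^ 2) * exp (-(b * a)) + exp (-(b * a ^ 2)) / (2 * b)) := by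
  simp_rw [show ∀ t, 2 * t * (A * (exp (-(b * t)) + exp (-(b * t ^ 2)))) =
      2 * A * (t * exp (-(b * t))) + 2 * A * (t * exp (-(b * t ^ 2))) from fun t => by ring]
  rw [integral_add ((integrableOn_Ioi_mul_exp_neg_mul hb ha).const_mul _)
      ((integrableOn_Ioi_mul_exp_neg_mul_sq hb ha).const_mul _),
    integral_const_mul, integral_const_mul, integral_Ioi_mul_exp_neg_mul hb ha,
    integral_Ioi_mul_exp_neg_mul_sq hb ha, mul_add]

end TailIntegrals

theorem lintegral_sq_eq_lintegral_meas_lt_mul {Ω : Type*} [MeasurableSpace Ω] (μ : Measure Ω)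
    {X : Ω → ℝ} (hX : 0 ≤ᵐ[μ] X) (hXm : AEMeasurable X μ) :
    ∫⁻ ω, ENNReal.ofReal (X ω ^ 2) ∂μ =
      ∫⁻ t in Ioi 0, μ {ω | t < X ω} * ENNReal.ofReal (2 * t) := by
  have h := lintegral_comp_eq_lintegral_meas_lt_mul μ hX hXm (g := fun t => 2 * t)
    (fun _ _ => (continuous_const.mul continuous_id).intervalIntegrable _ _)
    (ae_restrict_of_forall_mem measurableSet_Ioi fun t ht => by have := ht.out; positivity)
  have hsq : ∀ x : ℝ, ∫ t in 0..x, 2 * t = x ^ 2 := fun x => by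
    rw [intervalIntegral.integral_const_mul, integral_id]
    ring
  simpa only [hsq] using h

theorem setLIntegral_Ioc_ofReal_two_mul {a : ℝ} (ha : 0 ≤ a) :
    ∫⁻ t in Ioc 0 a, ENNReal.ofReal (2 * t) = ENNReal.ofReal (a ^ 2) := by
  have hint : IntegrableOn (fun t : ℝ => 2 * t) (Ioc 0 a) :=
    (continuous_const.mul continuous_id).integrableOn_Ioc
  rw [← ofReal_integral_eq_lintegral_ofReal hint
    (ae_restrict_of_forall_mem measurableSet_Ioc fun t ht => by have := ht.1; positivity),
    ← intervalIntegral.integral_of_le ha, intervalIntegral.integral_const_mul, integral_id]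
  ring_nf

theorem integral_sq_le_of_meas_lt_le {Ω : Type*} [MeasurableSpace Ω] {μ : Measure Ω}
    [IsProbabilityMeasure μ] {X : Ω → ℝ} (hX : 0 ≤ᵐ[μ] X) (hXm : AEMeasurable X μ)
    {t₀ : ℝ} (ht₀ : 0 ≤ t₀) {f : ℝ → ℝ} (hf : ∀ t, t₀ < t → μ.real {ω | t < X ω} ≤ f t)
    (hfi : IntegrableOn (fun t => 2 * t * f t) (Ioi t₀)) :
    ∫ ω, X ω ^ 2 ∂μ ≤ t₀ ^ 2 + ∫ t in Ioi t₀, 2 * t * f t := by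
  have hf0 : ∀ t ∈ Ioi t₀, 0 ≤ 2 * t * f t := fun t ht =>
    mul_nonneg (by linarith [ht.out]) (measureReal_nonneg.trans (hf t ht))
  have hbody : ∫⁻ t in Ioc 0 t₀, μ {ω | t < X ω} * ENNReal.ofReal (2 * t) ≤
      ENNReal.ofReal (t₀ ^ 2) := by
    rw [← setLIntegral_Ioc_ofReal_two_mul ht₀]
    exact setLIntegral_mono' measurableSet_Ioc fun t _ => mul_le_of_le_one_left' prob_le_one
  have htail : ∫⁻ t in Ioi t₀, μ {ω | t < X ω} * ENNReal.ofReal (2 * t) ≤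
      ENNReal.ofReal (∫ t in Ioi t₀, 2 * t * f t) := by
    rw [ofReal_integral_eq_lintegral_ofReal hfi (ae_restrict_of_forall_mem measurableSet_Ioi hf0)]
    refine setLIntegral_mono' measurableSet_Ioi fun t ht => ?_
    rw [mul_comm (2 * t), ENNReal.ofReal_mul (measureReal_nonneg.trans (hf t ht)),
      ← ofReal_measureReal]
    gcongr
    exact hf t ht
  have hlintegral : ∫⁻ ω, ENNReal.ofReal (X ω ^ 2) ∂μ ≤
      ENNReal.ofReal (t₀ ^ 2 + ∫ t in Ioi t₀, 2 * t * f t) := by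
    rw [lintegral_sq_eq_lintegral_meas_lt_mul μ hX hXm, ← Ioc_union_Ioi_eq_Ioi ht₀,
      lintegral_union measurableSet_Ioi (Ioc_disjoint_Ioi le_rfl),
      ENNReal.ofReal_add (sq_nonneg _) (setIntegral_nonneg measurableSet_Ioi hf0)]
    exact add_le_add hbody htail
  rw [integral_eq_lintegral_of_nonneg_ae (Eventually.of_forall fun ω => sq_nonneg (X ω))
    (hXm.pow_const 2).aestronglyMeasurable]
  exact ENNReal.toReal_le_of_le_ofReal
    (add_nonneg (sq_nonneg _) (setIntegral_nonneg measurableSet_Ioi hf0)) hlintegral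

theorem second_moment_estimate_le {ε r D : ℝ} (hε0 : 0 < ε) (hε1 : ε < 1) (hr : 8 / ε ≤ r)
    (hD0 : 0 ≤ D) (hD : D ≤ exp (r * ε ^ 2)) :
    (2 * ε) ^ 2 + 2 * (8 * D) * ((2 * ε / r + 1 / r ^ 2) * exp (-(r * (2 * ε))) +
      exp (-(r * (2 * ε) ^ 2)) / (2 * r)) ≤ 6 * ε := by
  have hrε : 8 ≤ r * ε := by rwa [div_le_iff₀ hε0] at hr
  have hr0 : 0 < r := by nlinarith
  set u := r⁻¹ with hu
  have hu8 : u ≤ ε / 8 := by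
    rw [hu, inv_le_iff_one_le_mul₀ hr0]; linarith
  have hlin : D * exp (-(r * (2 * ε))) ≤ 1 / 9 := by
    calc D * exp (-(r * (2 * ε))) ≤ exp (r * ε ^ 2) * exp (-(r * (2 * ε))) := by gcongr
      _ ≤ exp (-(r * ε)) := by
          rw [← exp_add]
          gcongr
          nlinarith [mul_pos hr0 hε0]
      _ ≤ 1 / 9 := by
          rw [exp_neg, one_div]
          gcongr
          linarith [add_one_le_exp (r * ε)]
  have hquad : D * exp (-(r * (2 * ε) ^ 2)) ≤ 1 := by
    calc D * exp (-(r * (2 * ε) ^ 2)) ≤ exp (r * ε ^ 2) * exp (-(r * (2 * ε) ^ 2)) := by gcongr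
      _ ≤ 1 := by
          rw [← exp_add, exp_le_one_iff]
          nlinarith [mul_pos hr0 (pow_pos hε0 2)]
  calc (2 * ε) ^ 2 + 2 * (8 * D) * ((2 * ε / r + 1 / r ^ 2) * exp (-(r * (2 * ε))) +
        exp (-(r * (2 * ε) ^ 2)) / (2 * r))
      = 4 * ε ^ 2 + 16 * ((2 * ε * u + u ^ 2) * (D * exp (-(r * (2 * ε)))) +
          u / 2 * (D * exp (-(r * (2 * ε) ^ 2)))) := by
        rw [hu]; field_simp; ring
    _ ≤ 4 * ε ^ 2 + 16 * ((2 * ε * (ε / 8) + (ε / 8) ^ 2) * (1 / 9) + ε / 8 / 2 * 1) := by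
        gcongr
    _ ≤ 6 * ε := by nlinarith

theorem tail_bound_second_moment_general {Ω : Type*} [MeasurableSpace Ω]
    (μ : Measure Ω) [IsProbabilityMeasure μ]
    (X : Ω → ℝ) (hX_nonneg : ∀ ω, 0 ≤ X ω) (hX_int : Integrable X μ)
    (d : ℕ) (c K : ℝ) (hc : 0 < c)
    (htail : ∀ t : ℝ, 0 ≤ t →
      (μ {ω | t < X ω}).toReal ≤ 8 * (d : ℝ) ^ 2 * exp (-(c * K * min t (t ^ 2))))
    (ε : ℝ) (hε : ε ∈ Set.Ioo (0:ℝ) 1)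
    (hKbig : max (ε⁻¹ ^ 2) (max (8 / (c * ε)) (2 * Real.log d / (c * ε ^ 2))) ≤ K) :
    ∫ ω, (X ω) ^ 2 ∂μ ≤ 6 * ε := by
  obtain ⟨hε0, hε1⟩ := hε
  set r := c * K
  have hr : 8 / ε ≤ r := by
    have h := (le_max_left _ _).trans ((le_max_right _ _).trans hKbig)
    rw [div_le_iff₀ (by positivity)] at h
    rw [div_le_iff₀ hε0]
    linarith
  have hd2 : (d : ℝ) ^ 2 ≤ exp (r * ε ^ 2) := by
    have h := (le_max_right _ _).trans ((le_max_right _ _).trans hKbig)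
    rw [div_le_iff₀ (by positivity)] at h
    calc (d : ℝ) ^ 2 ≤ exp (Real.log ((d : ℝ) ^ 2)) := le_exp_log _
      _ ≤ exp (r * ε ^ 2) := exp_le_exp.2 (by rw [Real.log_pow]; push_cast; linarith)
  have hr0 : 0 < r := lt_of_lt_of_le (by positivity) hr
  have ht₀ : (0 : ℝ) ≤ 2 * ε := by positivity
  have hmeas : ∀ t, 2 * ε < t →
      μ.real {ω | t < X ω} ≤ 8 * (d : ℝ) ^ 2 * (exp (-(r * t)) + exp (-(r * t ^ 2))) :=
    fun t ht => (htail t (ht₀.trans ht.le)).trans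
      (by gcongr; exact exp_neg_mul_min_le_add r t (t ^ 2))
  calc ∫ ω, X ω ^ 2 ∂μ
      ≤ (2 * ε) ^ 2 + ∫ t in Ioi (2 * ε),
          2 * t * (8 * (d : ℝ) ^ 2 * (exp (-(r * t)) + exp (-(r * t ^ 2)))) :=
        integral_sq_le_of_meas_lt_le (ae_of_all _ hX_nonneg) hX_int.aemeasurable ht₀ hmeas
          (integrableOn_Ioi_two_mul_mul_exp_neg_add hr0 ht₀ _)
    _ ≤ 6 * ε := by
        rw [integral_Ioi_two_mul_mul_exp_neg_add hr0 ht₀]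
        exact second_moment_estimate_le hε0 hε1 hr (by positivity) hd2

/-- Tail-bound integration lemma (second moment): if a nonnegative random variable
satisfies P(X > t) ≤ 8 d² exp(−c K min{t, t²}) for all t ≥ 0, and
K ≥ max{ε⁻², 8/(cε), 2 log d/(c ε²)} with ε ∈ (0,1), then E X² ≤ 6ε. -/
theorem tail_bound_second_moment {Ω : Type*} [MeasurableSpace Ω]
    (μ : Measure Ω) [IsProbabilityMeasure μ]
    (X : Ω → ℝ) (hX_nonneg : ∀ ω, 0 ≤ X ω) (hX_int : Integrable X μ) (hX2_int : Integrable (fun ω => (X ω) ^ 2) μ)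
    (d : ℕ) (hd : 1 ≤ d) (c K : ℝ) (hc : 0 < c) (hK : 0 < K)
    (htail : ∀ t : ℝ, 0 ≤ t →
      (μ {ω | t < X ω}).toReal ≤ 8 * (d : ℝ) ^ 2 * exp (-(c * K * min t (t ^ 2))))
    (ε : ℝ) (hε : ε ∈ Set.Ioo (0:ℝ) 1)
    (hKbig : max (ε⁻¹ ^ 2) (max (8 / (c * ε)) (2 * Real.log d / (c * ε ^ 2))) ≤ K) :
    ∫ ω, (X ω) ^ 2 ∂μ ≤ 6 * ε :=
  tail_bound_second_moment_general μ X hX_nonneg hX_int d c K hc htail ε hε hKbig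
end

section
/- Let A ∈ ℝ^{d×d} satisfy the weak local interaction condition max_i Σ_k |A_{i,k}| λ_A^{−𝐝(i,k)} ≤ λ_A for some 0 < λ_A < 1 and a metric 𝐝 on {1,…,d}. Suppose C ∈ ℝ^{d×d} satisfies |C_{m,m'}| ≤ M λ_A^{𝐝(m,m') ∧ k} for all m, m'. Then for all i, j, |(A C A^T)_{i,j}| ≤ λ_A² M λ_A^{𝐝(i,j) ∧ k}. -/
open Matrix BigOperators

/-- Weak local interaction propagates localized covariance: if
max_i Σ_k |A_{i,k}| λ^{−𝐝(i,k)} ≤ λ and |C_{m,m'}| ≤ M λ^{𝐝(m,m') ∧ k}, then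
|(A C Aᵀ)_{i,j}| ≤ λ² M λ^{𝐝(i,j) ∧ k}. -/
theorem weak_interaction_propagates_localization {d : ℕ}
    (dd : Fin d → Fin d → ℝ)
    (hdd_self : ∀ i j, dd i j = 0 ↔ i = j)
    (hdd_symm : ∀ i j, dd i j = dd j i)
    (hdd_tri : ∀ i j k, dd i k ≤ dd i j + dd j k)
    (lam : ℝ) (hlam : 0 < lam) (hlam1 : lam < 1)
    (A C : Matrix (Fin d) (Fin d) ℝ)
    (hweak : ∀ i : Fin d, ∑ k : Fin d, |A i k| * lam ^ (-(dd i k)) ≤ lam)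
    (M : ℝ) (hM : 0 ≤ M) (k : ℕ)
    (hC : ∀ m m' : Fin d, |C m m'| ≤ M * lam ^ (min (dd m m') (k : ℝ))) :
    ∀ i j : Fin d, |(A * C * Aᵀ) i j| ≤ lam ^ 2 * M * lam ^ (min (dd i j) (k : ℝ)) := by
  intro i j
  have hdd0 : ∀ a b : Fin d, 0 ≤ dd a b := by
    intro a b
    have h := hdd_tri a b a
    rw [(hdd_self a a).mpr rfl] at h
    have hs := hdd_symm a b
    linarith
  set E : ℝ := min (dd i j) (k : ℝ) with hE
  have hkey : ∀ y x : Fin d,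
      |C y x| ≤ M * lam ^ E * (lam ^ (-(dd i y)) * lam ^ (-(dd j x))) := by
    intro y x
    have h1 : E ≤ dd i y + dd j x + min (dd y x) (k : ℝ) := by
      rcases le_total (dd y x) (k : ℝ) with h | h
      · have t1 := hdd_tri i y j
        have t2 := hdd_tri y x j
        have hs := hdd_symm x j
        have hm : E ≤ dd i j := min_le_left _ _
        rw [min_eq_left h]
        linarith
      · rw [min_eq_right h]
        have h1 := hdd0 i y
        have h2 := hdd0 j x
        have hm : E ≤ (k : ℝ) := min_le_right _ _
        linarith
    have h2 : lam ^ (min (dd y x) (k : ℝ)) ≤ lam ^ (E - dd i y - dd j x) :=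
      Real.rpow_le_rpow_of_exponent_ge hlam hlam1.le (by linarith)
    have h3 : lam ^ (E - dd i y - dd j x)
        = lam ^ E * (lam ^ (-(dd i y)) * lam ^ (-(dd j x))) := by
      rw [← Real.rpow_add hlam, ← Real.rpow_add hlam]
      ring_nf
    calc |C y x| ≤ M * lam ^ (min (dd y x) (k : ℝ)) := hC y x
      _ ≤ M * lam ^ (E - dd i y - dd j x) := by
          exact mul_le_mul_of_nonneg_left h2 hM
      _ = M * lam ^ E * (lam ^ (-(dd i y)) * lam ^ (-(dd j x))) := by rw [h3]; ring
  have expand : (A * C * Aᵀ) i j = ∑ x : Fin d, ∑ y : Fin d, A i y * C y x * A j x := by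
    simp [Matrix.mul_apply, Matrix.transpose_apply, Finset.sum_mul]
  have step1 : |(A * C * Aᵀ) i j| ≤
      ∑ x : Fin d, ∑ y : Fin d,
        (|A i y| * lam ^ (-(dd i y))) * (|A j x| * lam ^ (-(dd j x))) * (M * lam ^ E) := by
    rw [expand]
    refine (Finset.abs_sum_le_sum_abs _ _).trans ?_
    refine Finset.sum_le_sum fun x _ => ?_
    refine (Finset.abs_sum_le_sum_abs _ _).trans ?_
    refine Finset.sum_le_sum fun y _ => ?_
    rw [abs_mul, abs_mul]
    have hk := hkey y x
    have h : |A i y| * |C y x| * |A j x|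
        ≤ |A i y| * (M * lam ^ E * (lam ^ (-(dd i y)) * lam ^ (-(dd j x)))) * |A j x| := by
      gcongr
    calc |A i y| * |C y x| * |A j x|
        ≤ |A i y| * (M * lam ^ E * (lam ^ (-(dd i y)) * lam ^ (-(dd j x)))) * |A j x| := h
      _ = (|A i y| * lam ^ (-(dd i y))) * (|A j x| * lam ^ (-(dd j x))) * (M * lam ^ E) := by
          ring
  have step2 : ∑ x : Fin d, ∑ y : Fin d,
        (|A i y| * lam ^ (-(dd i y))) * (|A j x| * lam ^ (-(dd j x))) * (M * lam ^ E)
      = (∑ y : Fin d, |A i y| * lam ^ (-(dd i y)))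
        * (∑ x : Fin d, |A j x| * lam ^ (-(dd j x))) * (M * lam ^ E) := by
    rw [Finset.sum_mul, Finset.sum_mul]
    rw [Finset.sum_comm]
    refine Finset.sum_congr rfl fun y _ => ?_
    rw [Finset.mul_sum, Finset.sum_mul]
  have hnn : ∀ a b : Fin d, (0:ℝ) ≤ |A a b| * lam ^ (-(dd a b)) := fun a b =>
    mul_nonneg (abs_nonneg _) (Real.rpow_nonneg hlam.le _)
  have hs1 : (0:ℝ) ≤ ∑ y : Fin d, |A i y| * lam ^ (-(dd i y)) :=
    Finset.sum_nonneg fun y _ => hnn i y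
  have hs2 : (0:ℝ) ≤ ∑ x : Fin d, |A j x| * lam ^ (-(dd j x)) :=
    Finset.sum_nonneg fun x _ => hnn j x
  have hME : 0 ≤ M * lam ^ E := mul_nonneg hM (Real.rpow_nonneg hlam.le _)
  calc |(A * C * Aᵀ) i j|
      ≤ (∑ y : Fin d, |A i y| * lam ^ (-(dd i y)))
        * (∑ x : Fin d, |A j x| * lam ^ (-(dd j x))) * (M * lam ^ E) := by
        rw [← step2]; exact step1
    _ ≤ lam * lam * (M * lam ^ E) := by
        have h1 := hweak i
        have h2 := hweak j
        gcongr
    _ = lam ^ 2 * M * lam ^ E := by ring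
end

section
/- Let A satisfy max_i Σ_k |A_{i,k}| λ_A^{−𝐝(i,k)} ≤ λ_A with 0 < λ_A < 1, let C be PSD with localization states M_k = max_{i,j}|C_{i,j}| λ_A^{−(𝐝(i,j)∧k)}, σ_ξ > 0, and define Ĉ = A C A^T + σ_ξ² I_d with states M̂_k. Then M̂_0 ≤ λ_A² M_0 + σ_ξ², M̂_k ≤ max{λ_A² M_k, M̂_0}, and M̂_{k+1} ≤ max{λ_A M_k, M̂_0}. -/
open Matrix BigOperators Real

/-- The localization state of a covariance matrix at radius k. -/
noncomputable def locState {d : ℕ} (C : Matrix (Fin d) (Fin d) ℝ)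
    (dd : Fin d → Fin d → ℝ) (lam : ℝ) (k : ℕ) : ℝ :=
  ⨆ i : Fin d, ⨆ j : Fin d, |C i j| * lam ^ (-(min (dd i j) (k : ℝ)))

lemma le_locState {d : ℕ} (C : Matrix (Fin d) (Fin d) ℝ)
    (dd : Fin d → Fin d → ℝ) (lam : ℝ) (k : ℕ) (i j : Fin d) :
    |C i j| * lam ^ (-(min (dd i j) (k : ℝ))) ≤ locState C dd lam k := by
  have h1 : |C i j| * lam ^ (-(min (dd i j) (k : ℝ))) ≤
      ⨆ j' : Fin d, |C i j'| * lam ^ (-(min (dd i j') (k : ℝ))) :=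
    le_ciSup (f := fun j' : Fin d => |C i j'| * lam ^ (-(min (dd i j') (k : ℝ))))
      (Set.Finite.bddAbove (Set.finite_range _)) j
  exact h1.trans (le_ciSup (f := fun i' : Fin d =>
      ⨆ j' : Fin d, |C i' j'| * lam ^ (-(min (dd i' j') (k : ℝ))))
      (Set.Finite.bddAbove (Set.finite_range _)) i)

lemma locState_le {d : ℕ} [Nonempty (Fin d)] (C : Matrix (Fin d) (Fin d) ℝ)
    (dd : Fin d → Fin d → ℝ) (lam : ℝ) (k : ℕ) (B : ℝ)
    (h : ∀ i j : Fin d, |C i j| * lam ^ (-(min (dd i j) (k : ℝ))) ≤ B) :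
    locState C dd lam k ≤ B :=
  ciSup_le fun i => ciSup_le fun j => h i j

lemma min_tri_aux {x y c k s : ℝ} (h : x ≤ y + c) (hc : 0 ≤ c) (hs : 0 ≤ s) :
    min x (k + s) ≤ min y k + c + s := by
  rcases le_total y k with h1 | h1
  · have := min_le_left x (k + s)
    rw [min_eq_left h1]; linarith
  · have := min_le_right x (k + s)
    rw [min_eq_right h1]; linarith

/-- Forecast step with weak local interaction: for Ĉ = A C Aᵀ + σ_ξ² I, the
localization states satisfy M̂_0 ≤ λ² M_0 + σ_ξ², M̂_k ≤ max{λ² M_k, M̂_0},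
and M̂_{k+1} ≤ max{λ M_k, M̂_0}. -/
theorem forecast_localization_states {d : ℕ}
    (dd : Fin d → Fin d → ℝ)
    (hdd_self : ∀ i j, dd i j = 0 ↔ i = j)
    (hdd_symm : ∀ i j, dd i j = dd j i)
    (hdd_tri : ∀ i j k, dd i k ≤ dd i j + dd j k)
    (lam : ℝ) (hlam : 0 < lam) (hlam1 : lam < 1)
    (A C : Matrix (Fin d) (Fin d) ℝ) (hC : C.PosSemidef)
    (hweak : ∀ i : Fin d, ∑ k : Fin d, |A i k| * lam ^ (-(dd i k)) ≤ lam)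
    (σξ : ℝ) (hσξ : 0 < σξ)
    (Chat : Matrix (Fin d) (Fin d) ℝ)
    (hChat : Chat = A * C * Aᵀ + σξ ^ 2 • (1 : Matrix (Fin d) (Fin d) ℝ)) :
    locState Chat dd lam 0 ≤ lam ^ 2 * locState C dd lam 0 + σξ ^ 2 ∧
    (∀ k : ℕ, locState Chat dd lam k ≤
      max (lam ^ 2 * locState C dd lam k) (locState Chat dd lam 0)) ∧
    (∀ k : ℕ, locState Chat dd lam (k + 1) ≤
      max (lam * locState C dd lam k) (locState Chat dd lam 0)) := by
  rcases Nat.eq_zero_or_pos d with hd | hd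
  · subst hd
    have hz : ∀ (M : Matrix (Fin 0) (Fin 0) ℝ) (k : ℕ), locState M dd lam k = 0 := by
      intro M k
      simp [locState, Real.iSup_of_isEmpty]
    refine ⟨?_, ?_, ?_⟩
    · simp only [hz]; positivity
    · intro k; simp [hz]
    · intro k; simp [hz]
  · haveI : Nonempty (Fin d) := ⟨⟨0, hd⟩⟩
    -- distances are nonneg
    have hd0 : ∀ i j, 0 ≤ dd i j := by
      intro i j
      have h1 : dd i i = 0 := (hdd_self i i).mpr rfl
      have h2 := hdd_tri i j i
      have h3 := hdd_symm i j
      linarith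
    -- entrywise formula for Chat
    have hentry : ∀ i j, Chat i j =
        (∑ p, ∑ q, A i p * C p q * A j q) + (if i = j then σξ ^ 2 else 0) := by
      intro i j
      rw [hChat]
      have h1 : (A * C * Aᵀ) i j = ∑ q, (∑ p, A i p * C p q) * A j q := by
        simp [Matrix.mul_apply, Matrix.transpose_apply]
      simp only [Matrix.add_apply, Matrix.smul_apply, Matrix.one_apply, smul_eq_mul,
        mul_ite, mul_one, mul_zero, h1]
      congr 1
      rw [Finset.sum_comm]
      simp [Finset.sum_mul]
    -- abs bound on entries
    have habs : ∀ i j, |Chat i j| ≤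
        (∑ p, ∑ q, |A i p| * |C p q| * |A j q|) + (if i = j then σξ ^ 2 else 0) := by
      intro i j
      rw [hentry i j]
      refine (abs_add_le _ _).trans (add_le_add ?_ ?_)
      · refine (Finset.abs_sum_le_sum_abs _ _).trans (Finset.sum_le_sum fun p _ => ?_)
        refine (Finset.abs_sum_le_sum_abs _ _).trans (Finset.sum_le_sum fun q _ => ?_)
        rw [abs_mul, abs_mul]
      · split <;> simp [abs_of_nonneg, le_of_lt hσξ, sq_nonneg]
    have hMk : ∀ k : ℕ, 0 ≤ locState C dd lam k := by
      intro k
      have h1 := le_locState C dd lam k ⟨0, hd⟩ ⟨0, hd⟩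
      have h2 : (0:ℝ) ≤ |C ⟨0, hd⟩ ⟨0, hd⟩| * lam ^ (-(min (dd ⟨0, hd⟩ ⟨0, hd⟩) ((k:ℕ):ℝ))) := by
        positivity
      linarith
    -- main sum bound
    have hmain : ∀ (k : ℕ) (s t : ℝ), 0 ≤ s →
        ∀ i j : Fin d, (∀ p q : Fin d, t ≤ min (dd p q) (k : ℝ) + dd i p + dd j q + s) →
        (∑ p, ∑ q, |A i p| * |C p q| * |A j q|) * lam ^ (-t) ≤
          lam ^ 2 * locState C dd lam k * lam ^ (-s) := by
      intro k s t hs i j ht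
      have hterm : ∀ p q : Fin d,
          |A i p| * |C p q| * |A j q| * lam ^ (-t) ≤
          ((|A i p| * lam ^ (-(dd i p))) * (|A j q| * lam ^ (-(dd j q)))) *
            (locState C dd lam k * lam ^ (-s)) := by
        intro p q
        have e1 : lam ^ (-t) ≤
            lam ^ (-(min (dd p q) (k : ℝ))) * lam ^ (-(dd i p)) * lam ^ (-(dd j q)) *
              lam ^ (-s) := by
          rw [← Real.rpow_add hlam, ← Real.rpow_add hlam, ← Real.rpow_add hlam]
          apply Real.rpow_le_rpow_of_exponent_ge hlam hlam1.le
          have := ht p q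
          linarith
        calc |A i p| * |C p q| * |A j q| * lam ^ (-t)
            ≤ |A i p| * |C p q| * |A j q| *
              (lam ^ (-(min (dd p q) (k : ℝ))) * lam ^ (-(dd i p)) * lam ^ (-(dd j q)) *
                lam ^ (-s)) := by
              apply mul_le_mul_of_nonneg_left e1
              positivity
          _ = ((|A i p| * lam ^ (-(dd i p))) * (|A j q| * lam ^ (-(dd j q)))) *
              ((|C p q| * lam ^ (-(min (dd p q) (k : ℝ)))) * lam ^ (-s)) := by ring
          _ ≤ ((|A i p| * lam ^ (-(dd i p))) * (|A j q| * lam ^ (-(dd j q)))) *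
              (locState C dd lam k * lam ^ (-s)) := by
              apply mul_le_mul_of_nonneg_left _ (by positivity)
              apply mul_le_mul_of_nonneg_right (le_locState C dd lam k p q)
              positivity
      calc (∑ p, ∑ q, |A i p| * |C p q| * |A j q|) * lam ^ (-t)
          = ∑ p, ∑ q, |A i p| * |C p q| * |A j q| * lam ^ (-t) := by
            simp [Finset.sum_mul]
        _ ≤ ∑ p, ∑ q, ((|A i p| * lam ^ (-(dd i p))) * (|A j q| * lam ^ (-(dd j q)))) *
              (locState C dd lam k * lam ^ (-s)) :=
            Finset.sum_le_sum fun p _ => Finset.sum_le_sum fun q _ => hterm p q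
        _ = ((∑ p, |A i p| * lam ^ (-(dd i p))) * (∑ q, |A j q| * lam ^ (-(dd j q)))) *
              (locState C dd lam k * lam ^ (-s)) := by
            rw [Finset.sum_mul_sum]
            simp only [Finset.sum_mul]
        _ ≤ (lam * lam) * (locState C dd lam k * lam ^ (-s)) := by
            apply mul_le_mul_of_nonneg_right _
              (mul_nonneg (hMk k) (Real.rpow_pos_of_pos hlam _).le)
            apply mul_le_mul (hweak i) (hweak j) _ hlam.le
            exact Finset.sum_nonneg fun q _ => by positivity
        _ = lam ^ 2 * locState C dd lam k * lam ^ (-s) := by ring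
    -- diagonal entries are bounded by Mhat_0
    have hdiagz : ∀ i : Fin d, dd i i = 0 := fun i => (hdd_self i i).mpr rfl
    have hdiag : ∀ i : Fin d, |Chat i i| ≤ locState Chat dd lam 0 := by
      intro i
      have h1 := le_locState Chat dd lam 0 i i
      simpa [hdiagz i] using h1
    -- triangle-based exponent estimate
    have htri : ∀ (k : ℕ) (s : ℝ), 0 ≤ s → ∀ i j p q : Fin d,
        min (dd i j) ((k : ℝ) + s) ≤ min (dd p q) (k : ℝ) + dd i p + dd j q + s := by
      intro k s hs i j p q
      have h1 : dd i j ≤ dd p q + (dd i p + dd j q) := by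
        have t1 := hdd_tri i p j
        have t2 := hdd_tri p q j
        have t3 := hdd_symm q j
        linarith
      have := min_tri_aux (k := (k:ℝ)) h1
        (by have := hd0 i p; have := hd0 j q; linarith) hs
      linarith
    -- first claim
    have claim1 : locState Chat dd lam 0 ≤ lam ^ 2 * locState C dd lam 0 + σξ ^ 2 := by
      apply locState_le
      intro i j
      have hm0 : min (dd i j) ((0:ℕ):ℝ) = 0 := by
        simp [min_eq_right (hd0 i j)]
      rw [hm0, neg_zero, Real.rpow_zero, mul_one]
      have h1 := habs i j
      have h2 := hmain 0 0 0 le_rfl i j (fun p q => by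
        have := hd0 i p
        have := hd0 j q
        have : (0:ℝ) ≤ min (dd p q) ((0:ℕ):ℝ) := le_min (hd0 p q) (by norm_num)
        push_cast at this ⊢
        linarith [hd0 i p, hd0 j q])
      rw [neg_zero, Real.rpow_zero, mul_one, mul_one] at h2
      have h3 : (if i = j then σξ ^ 2 else 0) ≤ σξ ^ 2 := by
        by_cases h : i = j
        · simp [h]
        · simp [h]; positivity
      linarith
    -- second claim
    have claim2 : ∀ k : ℕ, locState Chat dd lam k ≤
        max (lam ^ 2 * locState C dd lam k) (locState Chat dd lam 0) := by
      intro k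
      apply locState_le
      intro i j
      by_cases hij : i = j
      · subst hij
        have hm0 : min (dd i i) ((k:ℕ):ℝ) = 0 := by
          rw [hdiagz i]
          exact min_eq_left (by positivity)
        rw [hm0, neg_zero, Real.rpow_zero, mul_one]
        exact le_trans (hdiag i) (le_max_right _ _)
      · have h1 : |Chat i j| ≤ ∑ p, ∑ q, |A i p| * |C p q| * |A j q| := by
          have := habs i j
          simpa [hij] using this
        have h2 := hmain k 0 (min (dd i j) ((k:ℕ):ℝ)) le_rfl i j (fun p q => by
          have := htri k 0 le_rfl i j p q
          simpa using this)
        rw [neg_zero, Real.rpow_zero, mul_one] at h2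
        refine le_trans ?_ (le_trans h2 (le_max_left _ _))
        apply mul_le_mul_of_nonneg_right h1 (Real.rpow_pos_of_pos hlam _).le
    -- third claim
    have claim3 : ∀ k : ℕ, locState Chat dd lam (k + 1) ≤
        max (lam * locState C dd lam k) (locState Chat dd lam 0) := by
      intro k
      apply locState_le
      intro i j
      by_cases hij : i = j
      · subst hij
        have hm0 : min (dd i i) (((k + 1 :ℕ)):ℝ) = 0 := by
          rw [hdiagz i]
          exact min_eq_left (by positivity)
        rw [hm0, neg_zero, Real.rpow_zero, mul_one]
        exact le_trans (hdiag i) (le_max_right _ _)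
      · have h1 : |Chat i j| ≤ ∑ p, ∑ q, |A i p| * |C p q| * |A j q| := by
          have := habs i j
          simpa [hij] using this
        have h2 := hmain k 1 (min (dd i j) ((k:ℝ) + 1)) zero_le_one i j
          (fun p q => htri k 1 zero_le_one i j p q)
        have hcast : (((k + 1 : ℕ)):ℝ) = (k:ℝ) + 1 := by push_cast; ring
        rw [hcast]
        have h4 : lam ^ 2 * locState C dd lam k * lam ^ (-(1:ℝ)) =
            lam * locState C dd lam k := by
          rw [Real.rpow_neg_one]
          field_simp
        rw [h4] at h2
        refine le_trans ?_ (le_trans h2 (le_max_left _ _))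
        apply mul_le_mul_of_nonneg_right h1 (Real.rpow_pos_of_pos hlam _).le
    exact ⟨claim1, claim2, claim3⟩
end

section
/- Let r > 1, r_* ∈ (1, r], ρ > 0, and let (r_n)_{n≥0} be a sequence with r_n ≥ 1 satisfying the recursion r_{n+1} ≤ max{1, r_n/r} · (1 + (r/ρ)(μ_{n+1} + ν_{n+1})) with μ_{n+1}, ν_{n+1} ≥ 0. Then for every T ≥ 1, Σ_{n=0}^{T−1} 1_{r_n ≥ r_*} ≤ (log r_0)/(log r_*) + (1/log r_*) Σ_{n=0}^{T−1} ((r/ρ) μ_{n+1} + 2((r/ρ) ν_{n+1})^{1/3}). -/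
open BigOperators Real

lemma log_cube_le (y : ℝ) (hy : 0 ≤ y) : Real.log (1 + y^3) ≤ 2 * y := by
  rcases le_or_gt y 1 with h | h
  · calc Real.log (1 + y^3) ≤ (1 + y^3) - 1 :=
          Real.log_le_sub_one_of_pos (by positivity)
    _ = y^3 := by ring
    _ ≤ 2*y := by nlinarith [mul_nonneg (mul_nonneg hy (by linarith : (0:ℝ) ≤ 1 - y)) (by linarith : (0:ℝ) ≤ 1 + y)]
  · have hy1 : (1:ℝ) ≤ y := h.le
    have h13 : (1:ℝ) ≤ y^3 := one_le_pow₀ hy1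
    have h1 : (1:ℝ) + y^3 ≤ 2 * y^3 := by nlinarith
    have h2 : Real.log (1 + y^3) ≤ Real.log (2 * y^3) :=
      Real.log_le_log (by positivity) h1
    have h3 : Real.log (2 * y^3) = Real.log 2 + 3 * Real.log y := by
      rw [Real.log_mul (by norm_num) (by positivity), Real.log_pow]
      push_cast; ring
    have hs : Real.sqrt y ^ 2 = y := Real.sq_sqrt (by linarith)
    have hlogy : Real.log y = 2 * Real.log (Real.sqrt y) := by
      rw [← hs, Real.log_pow]; push_cast [hs]; ring
    have hsub : Real.log (Real.sqrt y) ≤ Real.sqrt y - 1 :=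
      Real.log_le_sub_one_of_pos (Real.sqrt_pos.mpr (by linarith))
    have hlog2 : Real.log 2 ≤ 1 := by
      have := Real.log_le_sub_one_of_pos (x := 2) (by norm_num); linarith
    have hs1 : (1:ℝ) ≤ Real.sqrt y := by
      rw [show (1:ℝ) = Real.sqrt 1 by simp]; exact Real.sqrt_le_sqrt hy1
    nlinarith [sq_nonneg (Real.sqrt y - 3/2)]

lemma log_one_add_le (x t : ℝ) (hx : 0 ≤ x) (ht : 0 ≤ t) :
    Real.log (1 + (x + t)) ≤ x + 2 * t ^ ((1:ℝ)/3) := by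
  set y := t ^ ((1:ℝ)/3) with hy
  have hy0 : 0 ≤ y := Real.rpow_nonneg ht _
  have hyt : y ^ 3 = t := by
    rw [hy, ← Real.rpow_natCast (t ^ ((1:ℝ)/3)) 3, ← Real.rpow_mul ht]
    norm_num
  have h1 : 1 + (x + t) ≤ (1 + x) * (1 + y^3) := by
    rw [hyt]; nlinarith
  calc Real.log (1 + (x + t)) ≤ Real.log ((1 + x) * (1 + y^3)) :=
        Real.log_le_log (by positivity) h1
  _ = Real.log (1 + x) + Real.log (1 + y^3) := Real.log_mul (by positivity) (by positivity)
  _ ≤ x + 2 * y := by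
      have := Real.log_le_sub_one_of_pos (x := 1 + x) (by positivity)
      have := log_cube_le y hy0
      linarith

/-- Long-time stability bookkeeping: if r_n ≥ 1 satisfies the recursion
r_{n+1} ≤ max{1, r_n/r} (1 + (r/ρ)(μ_{n+1}+ν_{n+1})), then the number of times
r_n ≥ r_* in the first T steps is controlled by log r_0 and the errors. -/
theorem recursion_exceedance_count
    (r rstar ρ : ℝ) (hr : 1 < r) (hrstar : 1 < rstar) (hrstar_le : rstar ≤ r)
    (hρ : 0 < ρ)
    (rn : ℕ → ℝ) (hrn : ∀ n, 1 ≤ rn n)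
    (μ ν : ℕ → ℝ) (hμ : ∀ n, 0 ≤ μ n) (hν : ∀ n, 0 ≤ ν n)
    (hrec : ∀ n, rn (n + 1) ≤
      max 1 (rn n / r) * (1 + (r / ρ) * (μ (n + 1) + ν (n + 1)))) :
    ∀ T : ℕ, 1 ≤ T →
      (∑ n ∈ Finset.range T, if rstar ≤ rn n then (1 : ℝ) else 0) ≤
        Real.log (rn 0) / Real.log rstar +
          (1 / Real.log rstar) *
            ∑ n ∈ Finset.range T,
              ((r / ρ) * μ (n + 1) + 2 * ((r / ρ) * ν (n + 1)) ^ ((1 : ℝ) / 3)) := by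
  have hc : 0 < Real.log rstar := Real.log_pos hrstar
  -- main induction
  have key : ∀ T : ℕ,
      Real.log (rn T) + Real.log rstar *
        (∑ n ∈ Finset.range T, if rstar ≤ rn n then (1 : ℝ) else 0) ≤
      Real.log (rn 0) +
        ∑ n ∈ Finset.range T,
          ((r / ρ) * μ (n + 1) + 2 * ((r / ρ) * ν (n + 1)) ^ ((1 : ℝ) / 3)) := by
    intro T
    induction T with
    | zero => simp
    | succ T ih =>
      rw [Finset.sum_range_succ, Finset.sum_range_succ]
      have hrρ : 0 ≤ r / ρ := div_nonneg (by linarith) hρ.le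
      have hx : 0 ≤ (r / ρ) * μ (T + 1) := mul_nonneg hrρ (hμ _)
      have ht : 0 ≤ (r / ρ) * ν (T + 1) := mul_nonneg hrρ (hν _)
      have hmaxpos : (0:ℝ) < max 1 (rn T / r) := lt_of_lt_of_le one_pos (le_max_left _ _)
      have hfac : (0:ℝ) < 1 + (r / ρ) * (μ (T + 1) + ν (T + 1)) := by nlinarith
      have hlog1 : Real.log (rn (T + 1)) ≤
          Real.log (max 1 (rn T / r)) + Real.log (1 + (r / ρ) * (μ (T + 1) + ν (T + 1))) := by
        rw [← Real.log_mul (ne_of_gt hmaxpos) (ne_of_gt hfac)]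
        exact Real.log_le_log (lt_of_lt_of_le one_pos (hrn _)) (hrec T)
      have hlog2 : Real.log (1 + (r / ρ) * (μ (T + 1) + ν (T + 1))) ≤
          (r / ρ) * μ (T + 1) + 2 * ((r / ρ) * ν (T + 1)) ^ ((1:ℝ)/3) := by
        have := log_one_add_le ((r / ρ) * μ (T + 1)) ((r / ρ) * ν (T + 1)) hx ht
        calc Real.log (1 + (r / ρ) * (μ (T + 1) + ν (T + 1)))
            = Real.log (1 + ((r / ρ) * μ (T + 1) + (r / ρ) * ν (T + 1))) := by ring_nf
          _ ≤ _ := this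
      have hmax : Real.log (max 1 (rn T / r)) ≤
          Real.log (rn T) - Real.log rstar * (if rstar ≤ rn T then (1:ℝ) else 0) := by
        by_cases h : rstar ≤ rn T
        · simp only [h, if_pos, mul_one]
          have h1 : max 1 (rn T / r) ≤ rn T / rstar := by
            apply max_le
            · rw [le_div_iff₀ (by linarith)]; linarith
            · apply div_le_div_of_nonneg_left (by linarith) (by linarith) hrstar_le
          calc Real.log (max 1 (rn T / r)) ≤ Real.log (rn T / rstar) :=
                Real.log_le_log hmaxpos h1
            _ = Real.log (rn T) - Real.log rstar :=
                Real.log_div (by linarith [hrn T]) (by linarith)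
        · simp only [h, if_neg, not_false_iff, mul_zero, sub_zero]
          have h1 : max 1 (rn T / r) ≤ rn T := by
            apply max_le (hrn T)
            rw [div_le_iff₀ (by linarith)]
            nlinarith [hrn T]
          exact Real.log_le_log hmaxpos h1
      have := ih
      linarith
  intro T _
  have h := key T
  have hlogT : 0 ≤ Real.log (rn T) := Real.log_nonneg (hrn T)
  have h2 : Real.log rstar *
      (∑ n ∈ Finset.range T, if rstar ≤ rn n then (1 : ℝ) else 0) ≤
      Real.log (rn 0) +
        ∑ n ∈ Finset.range T,
          ((r / ρ) * μ (n + 1) + 2 * ((r / ρ) * ν (n + 1)) ^ ((1 : ℝ) / 3)) := by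
    linarith
  rw [← le_div_iff₀' hc] at h2
  calc (∑ n ∈ Finset.range T, if rstar ≤ rn n then (1 : ℝ) else 0) ≤ _ := h2
    _ = Real.log (rn 0) / Real.log rstar +
          (1 / Real.log rstar) *
            ∑ n ∈ Finset.range T,
              ((r / ρ) * μ (n + 1) + 2 * ((r / ρ) * ν (n + 1)) ^ ((1 : ℝ) / 3)) := by
      field_simp
end
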